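/- SCIP velocity error recursion: in the statically condensed iterated penalty method, with errors eⁿ := ũ − ũⁿ where ũ solves the boundary Stokes problem with Dũ = 0 and ũⁿ are the SCIP iterates on X̃_B, the errors satisfy (α + λ/Υ̃²)‖eⁿ⁺¹‖ ≤ M‖eⁿ‖ with Υ̃ := (M+α)²/(α²β), and hence ‖eⁿ‖ ≤ (MΥ̃²/λ)ⁿ‖e⁰‖ and ‖Dũⁿ‖ ≤ C_D (MΥ̃²/λ)ⁿ‖ũ − ũ⁰‖. -/

import Mathlib

open scoped RealInnerProductSpace

/-- The boundary space `X̃_B`. -/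
def tildeXB {V Q : Type*}
    [NormedAddCommGroup V] [InnerProductSpace ℝ V]
    [NormedAddCommGroup Q] [InnerProductSpace ℝ Q]
    (a : V →ₗ[ℝ] V →ₗ[ℝ] ℝ) (D : V →ₗ[ℝ] Q) (I : Submodule ℝ V) : Set V :=
  {v : V | (∀ z ∈ I, D z = 0 → a v z = 0) ∧ (∀ w ∈ I, ⟪D v, D w⟫ = 0)}

/-- The adjoint boundary space `X̃_B†`. -/
def tildeXBd {V Q : Type*}
    [NormedAddCommGroup V] [InnerProductSpace ℝ V]
    [NormedAddCommGroup Q] [InnerProductSpace ℝ Q]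
    (a : V →ₗ[ℝ] V →ₗ[ℝ] ℝ) (D : V →ₗ[ℝ] Q) (I : Submodule ℝ V) : Set V :=
  {v : V | (∀ z ∈ I, D z = 0 → a z v = 0) ∧ (∀ w ∈ I, ⟪D v, D w⟫ = 0)}

section aux

variable {V Q : Type*}
    [NormedAddCommGroup V] [InnerProductSpace ℝ V] [FiniteDimensional ℝ V]
    [NormedAddCommGroup Q] [InnerProductSpace ℝ Q]

/-- Solvability of the interior problem for a coercive form on a finite-dimensional
submodule. -/
lemma scip_exists_dual_solve (a : V →ₗ[ℝ] V →ₗ[ℝ] ℝ) (α : ℝ) (hα : 0 < α)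
    (hcoer : ∀ v : V, α * ‖v‖ ^ 2 ≤ a v v)
    (N : Submodule ℝ V) (f : V →ₗ[ℝ] ℝ) :
    ∃ z ∈ N, ∀ y ∈ N, a z y = f y := by
  set T : N →ₗ[ℝ] Module.Dual ℝ N := a.domRestrict₁₂ N N with hT
  have hinj : Function.Injective T := by
    rw [← LinearMap.ker_eq_bot, LinearMap.ker_eq_bot']
    intro z hz
    have h0 : a (z : V) (z : V) = 0 := by
      have := congrFun (congrArg (fun g => g.toFun) hz) z
      simpa [hT, LinearMap.domRestrict₁₂_apply] using this
    have h1 := hcoer (z : V)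
    rw [h0] at h1
    have h3 : (z : V) = 0 := by
      by_contra hne
      have hzpos : 0 < ‖(z : V)‖ := norm_pos_iff.mpr hne
      nlinarith [mul_pos hα (mul_pos hzpos hzpos)]
    ext
    simpa using h3
  have hsurj : Function.Surjective T :=
    (LinearMap.injective_iff_surjective_of_finrank_eq_finrank
      (Subspace.dual_finrank_eq).symm).mp hinj
  obtain ⟨z, hz⟩ := hsurj (f.domRestrict N)
  refine ⟨(z : V), z.2, fun y hy => ?_⟩
  have := congrFun (congrArg (fun g => g.toFun) hz) ⟨y, hy⟩
  simpa [hT, LinearMap.domRestrict₁₂_apply] using this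

/-- The Riesz representative in `V` of the functional `v ↦ ⟪q, D v⟫`. -/
noncomputable def scipRieszD (D : V →ₗ[ℝ] Q) : Q →ₗ[ℝ] V where
  toFun q := (InnerProductSpace.toDual ℝ V).symm
    (((innerSL ℝ) q).comp (LinearMap.toContinuousLinearMap D))
  map_add' q r := by
    simp [ContinuousLinearMap.add_comp]
  map_smul' c q := by
    simp [ContinuousLinearMap.smul_comp]

lemma scipRieszD_apply (D : V →ₗ[ℝ] Q) (q : Q) (v : V) :
    ⟪scipRieszD D q, v⟫ = ⟪q, D v⟫ := by
  simp [scipRieszD, InnerProductSpace.toDual_symm_apply]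

/-- The inf-sup condition yields a bounded right inverse of `D`. -/
lemma scip_exists_right_inverse (D : V →ₗ[ℝ] Q) (β : ℝ) (hβ : 0 < β)
    (hinfsup : ∀ q ∈ LinearMap.range D,
      β * ‖q‖ ≤ ⨆ v : {v : V // v ≠ 0}, ⟪D v.1, q⟫ / ‖v.1‖)
    (q : Q) (hq : q ∈ LinearMap.range D) : ∃ w : V, D w = q ∧ ‖w‖ ≤ ‖q‖ / β := by
  have hlow : ∀ p ∈ LinearMap.range D, β * ‖p‖ ≤ ‖scipRieszD D p‖ := by
    intro p hp
    refine (hinfsup p hp).trans (Real.iSup_le (fun v => ?_) (norm_nonneg _))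
    have hv : 0 < ‖v.1‖ := norm_pos_iff.mpr v.2
    rw [div_le_iff₀ hv]
    calc ⟪D v.1, p⟫ = ⟪scipRieszD D p, v.1⟫ := by rw [scipRieszD_apply, real_inner_comm]
    _ ≤ ‖scipRieszD D p‖ * ‖v.1‖ := real_inner_le_norm _ _
  set R := LinearMap.range D with hR
  set T : R →ₗ[ℝ] R := ((D.comp (scipRieszD D)).comp R.subtype).codRestrict R
    (fun p => LinearMap.mem_range_self D _) with hTdef
  have hTapp : ∀ p : R, (T p : Q) = D (scipRieszD D (p : Q)) := fun p => rfl
  have hinj : Function.Injective T := by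
    rw [← LinearMap.ker_eq_bot, LinearMap.ker_eq_bot']
    intro p hp
    have h0 : D (scipRieszD D (p : Q)) = 0 := by
      have := congrArg (Subtype.val) hp
      simpa [hTapp] using this
    have h1 : ‖scipRieszD D (p : Q)‖ ^ 2 = 0 := by
      rw [← real_inner_self_eq_norm_sq, scipRieszD_apply, h0, inner_zero_right]
    have h2 := hlow (p : Q) p.2
    have h4 : ‖scipRieszD D (p : Q)‖ = 0 := by
      have := sq_nonneg ‖scipRieszD D (p : Q)‖
      nlinarith [norm_nonneg (scipRieszD D (p : Q))]
    rw [h4] at h2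
    have h5 : (p : Q) = 0 := by
      by_contra hne
      have : 0 < ‖(p : Q)‖ := norm_pos_iff.mpr hne
      nlinarith
    ext
    simpa using h5
  have hsurj : Function.Surjective T := (LinearMap.injective_iff_surjective).mp hinj
  obtain ⟨p, hp⟩ := hsurj ⟨q, hq⟩
  have hDw : D (scipRieszD D (p : Q)) = q := by simpa [hTapp] using congrArg Subtype.val hp
  refine ⟨scipRieszD D (p : Q), hDw, ?_⟩
  have h1 : ‖scipRieszD D (p : Q)‖ ^ 2 = ⟪(p : Q), q⟫ := by
    rw [← real_inner_self_eq_norm_sq, scipRieszD_apply, hDw]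
  have h2 : (⟪(p : Q), q⟫ : ℝ) ≤ ‖(p : Q)‖ * ‖q‖ := real_inner_le_norm _ _
  have h3 := hlow (p : Q) p.2
  rcases eq_or_lt_of_le (norm_nonneg (scipRieszD D (p : Q))) with h | h
  · rw [← h]; positivity
  · rw [le_div_iff₀ hβ]
    nlinarith [mul_le_mul_of_nonneg_right h3 (norm_nonneg q),
      mul_le_mul_of_nonneg_left h2 hβ.le, mul_pos h h]

/-- `X̃_B` is closed under subtraction. -/
lemma scip_tildeXB_sub (a : V →ₗ[ℝ] V →ₗ[ℝ] ℝ) (D : V →ₗ[ℝ] Q) (I : Submodule ℝ V)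
    {x y : V} (hx : x ∈ tildeXB a D I) (hy : y ∈ tildeXB a D I) :
    x - y ∈ tildeXB a D I := by
  obtain ⟨hx1, hx2⟩ := hx
  obtain ⟨hy1, hy2⟩ := hy
  constructor
  · intro z hz hDz
    simp [map_sub, LinearMap.sub_apply, hx1 z hz hDz, hy1 z hz hDz]
  · intro w hw
    simp [map_sub, inner_sub_left, hx2 w hw, hy2 w hw]

set_option maxHeartbeats 1000000 in
/-- Key quantitative bound: `‖u‖ ≤ Υ̃ ‖D u‖` for `u ∈ X̃_B` which is
`a`-orthogonal to `Ñ_B†`. -/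
lemma scip_upsilon_bound (a : V →ₗ[ℝ] V →ₗ[ℝ] ℝ) (M α β : ℝ)
    (hM : 0 < M) (hα : 0 < α) (hβ : 0 < β)
    (hbdd : ∀ u v : V, |a u v| ≤ M * ‖u‖ * ‖v‖)
    (hcoer : ∀ v : V, α * ‖v‖ ^ 2 ≤ a v v)
    (D : V →ₗ[ℝ] Q)
    (hinfsup : ∀ q ∈ LinearMap.range D,
      β * ‖q‖ ≤ ⨆ v : {v : V // v ≠ 0}, ⟪D v.1, q⟫ / ‖v.1‖)
    (I : Submodule ℝ V)
    (u : V) (hu : u ∈ tildeXB a D I)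
    (horth : ∀ v ∈ tildeXBd a D I, D v = 0 → a u v = 0) :
    ‖u‖ ≤ (M + α) ^ 2 / (α ^ 2 * β) * ‖D u‖ := by
  have hcoer' : ∀ v : V, α * ‖v‖ ^ 2 ≤ a.flip v v := fun v => by
    simpa [LinearMap.flip_apply] using hcoer v
  set N : Submodule ℝ V := I ⊓ LinearMap.ker D with hN
  obtain ⟨w, hw1, hw2⟩ := scip_exists_right_inverse D β hβ hinfsup (D u) ⟨u, rfl⟩
  -- z' ∈ N with a z' y = a w y for y ∈ N
  obtain ⟨z', hz'N, hz'⟩ := scip_exists_dual_solve a α hα hcoer N (a w)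
  have hz'I : z' ∈ I := (Submodule.mem_inf.mp hz'N).1
  have hz'D : D z' = 0 := LinearMap.mem_ker.mp (Submodule.mem_inf.mp hz'N).2
  have hz'norm : α * ‖z'‖ ≤ M * ‖w‖ := by
    rcases eq_or_lt_of_le (norm_nonneg z') with h | h
    · rw [← h, mul_zero]; positivity
    · have h1 := hcoer z'
      have h2 : a z' z' = a w z' := hz' z' hz'N
      have h3 : a w z' ≤ M * ‖w‖ * ‖z'‖ := le_trans (le_abs_self _) (hbdd w z')
      nlinarith
  -- w' = w - z' ∈ tildeXB with D w' = D u
  have hDw' : D (w - z') = D u := by rw [map_sub, hz'D, sub_zero, hw1]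
  have hw'mem : w - z' ∈ tildeXB a D I := by
    constructor
    · intro z hz hDz
      have hzN : z ∈ N := Submodule.mem_inf.mpr ⟨hz, LinearMap.mem_ker.mpr hDz⟩
      simp [map_sub, LinearMap.sub_apply, hz' z hzN]
    · intro x hx
      rw [hDw']
      exact hu.2 x hx
  -- x = u - w' ∈ tildeXB with D x = 0
  have hxmem : u - (w - z') ∈ tildeXB a D I := scip_tildeXB_sub a D I hu hw'mem
  set x := u - (w - z') with hxdef
  have hDx : D x = 0 := by rw [hxdef, map_sub, hDw', sub_self]
  -- z ∈ N with a y z = a y x for y ∈ N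
  obtain ⟨z, hzN, hz⟩ := scip_exists_dual_solve a.flip α hα hcoer' N (a.flip x)
  have hzI : z ∈ I := (Submodule.mem_inf.mp hzN).1
  have hzD : D z = 0 := LinearMap.mem_ker.mp (Submodule.mem_inf.mp hzN).2
  have hz'' : ∀ y ∈ N, a y z = a y x := fun y hy => by
    simpa [LinearMap.flip_apply] using hz y hy
  have hznorm : α * ‖z‖ ≤ M * ‖x‖ := by
    rcases eq_or_lt_of_le (norm_nonneg z) with h | h
    · rw [← h, mul_zero]; positivity
    · have h1 := hcoer z
      have h2 : a z z = a z x := hz'' z hzN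
      have h3 : a z x ≤ M * ‖z‖ * ‖x‖ := le_trans (le_abs_self _) (hbdd z x)
      nlinarith
  -- v = x - z ∈ Ñ_B†
  set v := x - z with hvdef
  have hDv : D v = 0 := by rw [hvdef, map_sub, hDx, hzD, sub_self]
  have hvmem : v ∈ tildeXBd a D I := by
    constructor
    · intro z₂ hz₂ hDz₂
      have hz₂N : z₂ ∈ N := Submodule.mem_inf.mpr ⟨hz₂, LinearMap.mem_ker.mpr hDz₂⟩
      simp [hvdef, map_sub, hz'' z₂ hz₂N]
    · intro x₂ hx₂
      rw [hDv]
      simp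
  -- α‖x‖² ≤ a x x = -a w v ≤ M‖w‖‖v‖
  have hxx : a x x = a x v := by
    have : a x z = 0 := hxmem.1 z hzI hzD
    simp [hvdef, map_sub, this]
  have hxv : a x v = - a w v := by
    have h1 : a u v = 0 := horth v hvmem hDv
    have h2 : a z' v = 0 := hvmem.1 z' hz'I hz'D
    have : a x v = a u v - (a w v - a z' v) := by
      simp [hxdef, map_sub, LinearMap.sub_apply]
    rw [this, h1, h2]
    ring
  have hwv : - a w v ≤ M * ‖w‖ * ‖v‖ := by
    have := (abs_le.mp (hbdd w v)).1
    linarith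
  have hvnorm : ‖v‖ ≤ ‖x‖ + ‖z‖ := norm_sub_le _ _
  -- combine: α² ‖x‖ ≤ M (M+α) ‖w‖
  have hxbound : α ^ 2 * ‖x‖ ≤ M * (M + α) * ‖w‖ := by
    rcases eq_or_lt_of_le (norm_nonneg x) with h | h
    · rw [← h, mul_zero]; positivity
    · have h1 := hcoer x
      have h2 : α * ‖x‖ ^ 2 ≤ M * ‖w‖ * (‖x‖ + ‖z‖) := by
        have : a x x ≤ M * ‖w‖ * ‖v‖ := by rw [hxx, hxv]; exact hwv
        nlinarith [mul_le_mul_of_nonneg_left hvnorm (mul_nonneg hM.le (norm_nonneg w))]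
      nlinarith [mul_le_mul_of_nonneg_left hznorm (mul_nonneg hM.le (norm_nonneg w)),
        mul_pos hα h, norm_nonneg z, norm_nonneg w]
  -- total: α² ‖u‖ ≤ (M+α)² ‖w‖
  have hunorm : ‖u‖ ≤ ‖x‖ + ‖w‖ + ‖z'‖ := by
    have h1 : u = x + (w - z') := by rw [hxdef]; abel
    calc ‖u‖ = ‖x + (w - z')‖ := by rw [← h1]
    _ ≤ ‖x‖ + ‖w - z'‖ := norm_add_le _ _
    _ ≤ ‖x‖ + (‖w‖ + ‖z'‖) := by linarith [norm_sub_le w z']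
    _ = ‖x‖ + ‖w‖ + ‖z'‖ := by ring
  have htotal : α ^ 2 * ‖u‖ ≤ (M + α) ^ 2 * ‖w‖ := by
    nlinarith [mul_le_mul_of_nonneg_left hunorm (sq_nonneg α),
      mul_le_mul_of_nonneg_left hz'norm hα.le, norm_nonneg w, norm_nonneg z']
  have hw2' : ‖w‖ * β ≤ ‖D u‖ := (le_div_iff₀ hβ).mp hw2
  rw [div_mul_eq_mul_div, le_div_iff₀ (by positivity)]
  nlinarith [mul_le_mul_of_nonneg_right htotal hβ.le,
    mul_le_mul_of_nonneg_left hw2' (sq_nonneg (M + α))]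

end aux

set_option maxHeartbeats 1000000 in
/-- geometric convergence of the SCIP iterates, with constant
`Υ̃ = (M+α)²/(α²β)`. -/
theorem scip_convergence {V Q : Type*}
    [NormedAddCommGroup V] [InnerProductSpace ℝ V] [FiniteDimensional ℝ V]
    [NormedAddCommGroup Q] [InnerProductSpace ℝ Q]
    (a : V →ₗ[ℝ] V →ₗ[ℝ] ℝ) (M α β lam CD : ℝ)
    (hM : 0 < M) (hα : 0 < α) (hβ : 0 < β) (hlam : 0 < lam) (hCD : 0 < CD)
    (hbdd : ∀ u v : V, |a u v| ≤ M * ‖u‖ * ‖v‖)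
    (hcoer : ∀ v : V, α * ‖v‖ ^ 2 ≤ a v v)
    (D : V →ₗ[ℝ] Q)
    (hDbdd : ∀ v : V, ‖D v‖ ≤ CD * ‖v‖)
    (hinfsup : ∀ q ∈ LinearMap.range D,
      β * ‖q‖ ≤ ⨆ v : {v : V // v ≠ 0}, ⟪D v.1, q⟫ / ‖v.1‖)
    (I : Submodule ℝ V)
    (L : V →ₗ[ℝ] ℝ)
    -- exact boundary solution
    (ut : V) (qt : Q) (hut : ut ∈ tildeXB a D I) (hqt : qt ∈ D '' tildeXB a D I)
    (hut1 : ∀ v ∈ tildeXBd a D I, a ut v - ⟪qt, D v⟫ = L v)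
    (hut2 : D ut = 0)
    -- SCIP iterates
    (un wn : ℕ → V) (hw0 : wn 0 = 0)
    (hmem : ∀ n : ℕ, un n ∈ tildeXB a D I)
    (hiter : ∀ n : ℕ, ∀ v ∈ tildeXBd a D I,
      a (un n) v + lam * ⟪D (un n), D v⟫ = L v + ⟪D (wn n), D v⟫)
    (hupdate : ∀ n : ℕ, wn (n + 1) = wn n - lam • un n) :
    (∀ n : ℕ, (α + lam / ((M + α) ^ 2 / (α ^ 2 * β)) ^ 2) * ‖ut - un (n + 1)‖ ≤
        M * ‖ut - un n‖) ∧
    (∀ n : ℕ, ‖ut - un n‖ ≤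
        (M * ((M + α) ^ 2 / (α ^ 2 * β)) ^ 2 / lam) ^ n * ‖ut - un 0‖) ∧
    (∀ n : ℕ, ‖D (un n)‖ ≤
        CD * (M * ((M + α) ^ 2 / (α ^ 2 * β)) ^ 2 / lam) ^ n * ‖ut - un 0‖) := by
  have hcoer' : ∀ v : V, α * ‖v‖ ^ 2 ≤ a.flip v v := fun v => by
    simpa [LinearMap.flip_apply] using hcoer v
  set Υ : ℝ := (M + α) ^ 2 / (α ^ 2 * β) with hΥdef
  have hΥ : 0 < Υ := by
    rw [hΥdef]
    exact div_pos (pow_pos (by linarith) 2) (by positivity)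
  set N : Submodule ℝ V := I ⊓ LinearMap.ker D with hN
  -- membership of errors
  have he : ∀ n : ℕ, ut - un n ∈ tildeXB a D I := fun n =>
    scip_tildeXB_sub a D I hut (hmem n)
  -- error equation
  have erre : ∀ n : ℕ, ∀ v ∈ tildeXBd a D I,
      a (ut - un n) v + lam * ⟪D (ut - un n), D v⟫ = ⟪qt - D (wn n), D v⟫ := by
    intro n v hv
    have h1 := hut1 v hv
    have h2 := hiter n v hv
    have e1 : a (ut - un n) v = a ut v - a (un n) v := by
      simp [map_sub, LinearMap.sub_apply]
    have e2 : (⟪D (ut - un n), D v⟫ : ℝ) = -⟪D (un n), D v⟫ := by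
      rw [map_sub, hut2, zero_sub, inner_neg_left]
    have e3 : (⟪qt - D (wn n), D v⟫ : ℝ) = ⟪qt, D v⟫ - ⟪D (wn n), D v⟫ :=
      inner_sub_left _ _ _
    rw [e1, e2, e3, mul_neg]
    linarith
  -- orthogonality to Ñ_B†
  have ortho : ∀ n : ℕ, ∀ v ∈ tildeXBd a D I, D v = 0 → a (ut - un n) v = 0 := by
    intro n v hv hDv
    have := erre n v hv
    rw [hDv] at this
    simpa using this
  -- key identity
  have key : ∀ n : ℕ, ∀ v ∈ tildeXBd a D I,
      a (ut - un (n + 1)) v + lam * ⟪D (ut - un (n + 1)), D v⟫ = a (ut - un n) v := by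
    intro n v hv
    have h1 := erre (n + 1) v hv
    have h2 := erre n v hv
    have hw : (⟪qt - D (wn (n + 1)), D v⟫ : ℝ)
        = ⟪qt - D (wn n), D v⟫ + lam * ⟪D (un n), D v⟫ := by
      rw [hupdate n, map_sub, map_smul]
      rw [inner_sub_left, inner_sub_left, inner_sub_left]
      rw [real_inner_smul_left]
      ring
    have h3 : (⟪D (ut - un n), D v⟫ : ℝ) = -⟪D (un n), D v⟫ := by
      rw [map_sub, hut2, zero_sub, inner_neg_left]
    rw [h3, mul_neg] at h2
    linarith
  -- part 1
  have part1 : ∀ n : ℕ, (α + lam / Υ ^ 2) * ‖ut - un (n + 1)‖ ≤ M * ‖ut - un n‖ := by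
    intro n
    obtain ⟨z₁, hz₁N, hz₁⟩ := scip_exists_dual_solve a.flip α hα hcoer' N
      (a.flip (ut - un (n + 1)))
    have hz₁I : z₁ ∈ I := (Submodule.mem_inf.mp hz₁N).1
    have hz₁D : D z₁ = 0 := LinearMap.mem_ker.mp (Submodule.mem_inf.mp hz₁N).2
    have hz₁' : ∀ y ∈ N, a y z₁ = a y (ut - un (n + 1)) := fun y hy => by
      simpa [LinearMap.flip_apply] using hz₁ y hy
    set e' := ut - un (n + 1) with he'def
    set en := ut - un n with hendef
    set v := e' - z₁ with hvdef
    have hDv : D v = D e' := by rw [hvdef, map_sub, hz₁D, sub_zero]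
    have hvmem : v ∈ tildeXBd a D I := by
      constructor
      · intro z₂ hz₂ hDz₂
        have hz₂N : z₂ ∈ N := Submodule.mem_inf.mpr ⟨hz₂, LinearMap.mem_ker.mpr hDz₂⟩
        simp [hvdef, map_sub, hz₁' z₂ hz₂N]
      · intro x₂ hx₂
        rw [hDv]
        exact (he (n + 1)).2 x₂ hx₂
    have hv1 : a e' v = a e' e' := by
      have : a e' z₁ = 0 := (he (n + 1)).1 z₁ hz₁I hz₁D
      simp [hvdef, map_sub, this]
    have hv2 : a en v = a en e' := by
      have : a en z₁ = 0 := (he n).1 z₁ hz₁I hz₁D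
      simp [hvdef, map_sub, this]
    have hk := key n v hvmem
    rw [hv1, hv2, hDv] at hk
    have hDn : (⟪D e', D e'⟫ : ℝ) = ‖D e'‖ ^ 2 := real_inner_self_eq_norm_sq _
    rw [hDn] at hk
    -- F1 : α‖e'‖² + lam‖De'‖² ≤ M‖en‖‖e'‖
    have hF1 : α * ‖e'‖ ^ 2 + lam * ‖D e'‖ ^ 2 ≤ M * ‖en‖ * ‖e'‖ := by
      have hc := hcoer e'
      have hb : a en e' ≤ M * ‖en‖ * ‖e'‖ := le_trans (le_abs_self _) (hbdd en e')
      linarith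
    -- F2 : ‖e'‖ ≤ Υ‖De'‖
    have hF2 : ‖e'‖ ≤ Υ * ‖D e'‖ :=
      scip_upsilon_bound a M α β hM hα hβ hbdd hcoer D hinfsup I e' (he (n + 1))
        (ortho (n + 1))
    rcases eq_or_lt_of_le (norm_nonneg e') with h | h
    · rw [← h, mul_zero]
      exact mul_nonneg hM.le (norm_nonneg _)
    · have hq : ‖e'‖ ^ 2 ≤ Υ ^ 2 * ‖D e'‖ ^ 2 := by
        nlinarith [mul_self_le_mul_self (norm_nonneg e') hF2]
      have hq2 : lam / Υ ^ 2 * ‖e'‖ ^ 2 ≤ lam * ‖D e'‖ ^ 2 := by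
        rw [div_mul_eq_mul_div, div_le_iff₀ (pow_pos hΥ 2)]
        nlinarith [mul_le_mul_of_nonneg_left hq hlam.le]
      have hfin : (α + lam / Υ ^ 2) * ‖e'‖ * ‖e'‖ ≤ M * ‖en‖ * ‖e'‖ := by
        nlinarith [hF1, hq2]
      exact le_of_mul_le_mul_right hfin h
  refine ⟨part1, ?_, ?_⟩
  · -- part 2
    have hstep : ∀ n : ℕ, ‖ut - un (n + 1)‖ ≤ M * Υ ^ 2 / lam * ‖ut - un n‖ := by
      intro n
      have hpos : 0 < lam / Υ ^ 2 := by positivity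
      have h2 : lam / Υ ^ 2 * ‖ut - un (n + 1)‖ ≤ M * ‖ut - un n‖ := by
        nlinarith [part1 n, mul_nonneg hα.le (norm_nonneg (ut - un (n + 1)))]
      have h3 : ‖ut - un (n + 1)‖ ≤ M * ‖ut - un n‖ / (lam / Υ ^ 2) :=
        (le_div_iff₀ hpos).mpr (by rw [mul_comm]; exact h2)
      have h4 : M * ‖ut - un n‖ / (lam / Υ ^ 2) = M * Υ ^ 2 / lam * ‖ut - un n‖ := by
        field_simp
      linarith
    intro n
    induction n with
    | zero => simp
    | succ n ih =>
      have hρ : (0 : ℝ) ≤ M * Υ ^ 2 / lam := by positivity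
      calc ‖ut - un (n + 1)‖ ≤ M * Υ ^ 2 / lam * ‖ut - un n‖ := hstep n
      _ ≤ M * Υ ^ 2 / lam * ((M * Υ ^ 2 / lam) ^ n * ‖ut - un 0‖) :=
        mul_le_mul_of_nonneg_left ih hρ
      _ = (M * Υ ^ 2 / lam) ^ (n + 1) * ‖ut - un 0‖ := by ring
  · -- part 3
    intro n
    have hpart2 : ‖ut - un n‖ ≤ (M * Υ ^ 2 / lam) ^ n * ‖ut - un 0‖ := by
      induction n with
      | zero => simp
      | succ m ih =>
        have hρ : (0 : ℝ) ≤ M * Υ ^ 2 / lam := by positivity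
        have hstep : ‖ut - un (m + 1)‖ ≤ M * Υ ^ 2 / lam * ‖ut - un m‖ := by
          have hpos : 0 < lam / Υ ^ 2 := by positivity
          have h2 : lam / Υ ^ 2 * ‖ut - un (m + 1)‖ ≤ M * ‖ut - un m‖ := by
            nlinarith [part1 m, mul_nonneg hα.le (norm_nonneg (ut - un (m + 1)))]
          have h3 : ‖ut - un (m + 1)‖ ≤ M * ‖ut - un m‖ / (lam / Υ ^ 2) :=
            (le_div_iff₀ hpos).mpr (by rw [mul_comm]; exact h2)
          have h4 : M * ‖ut - un m‖ / (lam / Υ ^ 2) = M * Υ ^ 2 / lam * ‖ut - un m‖ := by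
            field_simp
          linarith
        calc ‖ut - un (m + 1)‖ ≤ M * Υ ^ 2 / lam * ‖ut - un m‖ := hstep
        _ ≤ M * Υ ^ 2 / lam * ((M * Υ ^ 2 / lam) ^ m * ‖ut - un 0‖) :=
          mul_le_mul_of_nonneg_left ih hρ
        _ = (M * Υ ^ 2 / lam) ^ (m + 1) * ‖ut - un 0‖ := by ring
    have h1 : ‖D (un n)‖ = ‖D (ut - un n)‖ := by
      rw [map_sub, hut2, zero_sub, norm_neg]
    calc ‖D (un n)‖ = ‖D (ut - un n)‖ := h1
    _ ≤ CD * ‖ut - un n‖ := hDbdd _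
    _ ≤ CD * ((M * Υ ^ 2 / lam) ^ n * ‖ut - un 0‖) :=
      mul_le_mul_of_nonneg_left hpart2 hCD.le
    _ = CD * (M * Υ ^ 2 / lam) ^ n * ‖ut - un 0‖ := by ring
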